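/- arXiv:math/9911129 — 2 statements merged into one kernel-verified Lean document; each statement's English description precedes it below -/
import Mathlib

section
/- Let q ∈ ℂ with q^{1/2} - q^{-1/2} ≠ 0 and q² ≠ 1, let n ≥ 3, and fix signs ε₂,...,εₙ ∈ {+1,-1}. Define the algebra homomorphism data χ(I_{k,k-1}) = ε_k/(q^{1/2} - q^{-1/2}) for k = 2,...,n. Then these scalars satisfy all defining relations of U'_q(so_n): χ(I_{i+1,i})χ(I_{i,i-1})² - (q+q^{-1})χ(I_{i,i-1})χ(I_{i+1,i})χ(I_{i,i-1}) + χ(I_{i,i-1})²χ(I_{i+1,i}) = -χ(I_{i+1,i}), the symmetric relation with i+1,i and i,i-1 exchanged, and the commutation relations for |i-j| > 1. Hence χ extends to a one-dimensional representation of U'_q(so_n). -/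
/-! With `d = q^{1/2} - q^{-1/2}` we have `q + q⁻¹ = d² + 2` and `d² χ_k² = ε_k² = 1`; since the
scalars commute, the left side of each cubic relation collapses to `(2 - (d² + 2)) x² y = -y`. -/

lemma sq_sub_inv_add_two {K : Type*} [Field K] {s : K} (hs : s ≠ 0) :
    (s - s⁻¹) ^ 2 + 2 = s ^ 2 + (s ^ 2)⁻¹ := by
  field_simp
  ring

lemma cubic_relation_of_sq_mul_sq_eq_one {R : Type*} [CommRing R] {d x : R} (y : R)
    (h : d ^ 2 * x ^ 2 = 1) :
    y * x ^ 2 - (d ^ 2 + 2) * (x * y * x) + x ^ 2 * y = -y := by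
  linear_combination (-y) * h

theorem stmt_9_general (q s : ℂ) (hs : s ^ 2 = q) (hsne : s - s⁻¹ ≠ 0)
    (ε : ℕ → ℂ) (hε : ∀ k, ε k = 1 ∨ ε k = -1)
    (χ : ℕ → ℂ) (hχ : ∀ k, χ k = ε k / (s - s⁻¹)) :
    (∀ i, χ (i + 1) * χ i ^ 2 - (q + q⁻¹) * (χ i * χ (i + 1) * χ i) + χ i ^ 2 * χ (i + 1)
        = -χ (i + 1)) ∧
    (∀ i, χ (i + 1) ^ 2 * χ i - (q + q⁻¹) * (χ (i + 1) * χ i * χ (i + 1)) + χ i * χ (i + 1) ^ 2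
        = -χ i) ∧
    (∀ i j : ℕ, 1 < Int.natAbs ((i : ℤ) - (j : ℤ)) → χ i * χ j - χ j * χ i = 0) := by
  have hs0 : s ≠ 0 := fun h => hsne (by simp [h])
  have hq : q + q⁻¹ = (s - s⁻¹) ^ 2 + 2 := by rw [sq_sub_inv_add_two hs0, hs]
  have hχ_sq : ∀ k, (s - s⁻¹) ^ 2 * χ k ^ 2 = 1 := fun k => by
    rw [hχ, div_pow, mul_div_cancel₀ _ (pow_ne_zero 2 hsne)]
    rcases hε k with h | h <;> simp [h]
  refine ⟨fun i => ?_, fun i => ?_, fun i j _ => sub_eq_zero.mpr (mul_comm _ _)⟩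
  · rw [hq]
    exact cubic_relation_of_sq_mul_sq_eq_one _ (hχ_sq i)
  · rw [hq]
    linear_combination cubic_relation_of_sq_mul_sq_eq_one (χ i) (hχ_sq (i + 1))

/-- the scalars `χ(I_{k,k-1}) = ε_k/(q^{1/2} - q^{-1/2})`
(with `s` a square root of `q` playing the role of `q^{1/2}`) satisfy all
the defining relations (1)-(3) of `U'_q(so_n)`, hence define a one-dimensional
representation. -/
theorem stmt_9 (q s : ℂ) (hs : s ^ 2 = q) (hsne : s - s⁻¹ ≠ 0) (hq2 : q ^ 2 ≠ 1)
    (n : ℕ) (hn : 3 ≤ n) (ε : ℕ → ℂ) (hε : ∀ k, ε k = 1 ∨ ε k = -1)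
    (χ : ℕ → ℂ) (hχ : ∀ k, χ k = ε k / (s - s⁻¹)) :
    (∀ i, χ (i + 1) * χ i ^ 2 - (q + q⁻¹) * (χ i * χ (i + 1) * χ i) + χ i ^ 2 * χ (i + 1)
        = -χ (i + 1)) ∧
    (∀ i, χ (i + 1) ^ 2 * χ i - (q + q⁻¹) * (χ (i + 1) * χ i * χ (i + 1)) + χ i * χ (i + 1) ^ 2
        = -χ i) ∧
    (∀ i j : ℕ, 1 < Int.natAbs ((i : ℤ) - (j : ℤ)) → χ i * χ j - χ j * χ i = 0) :=
  stmt_9_general q s hs hsne ε hε χ hχ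
end

section
/- Let q be a positive real with q ≠ 1 and let l be a positive integer. Define the (2l+1)×(2l+1) complex matrices A and B indexed by m ∈ {-l, -l+1, ..., l}: B is diagonal with B_{mm} = i·[m], and A has nonzero entries only A_{m+1,m} = ([l+m+1][l-m])^{1/2}/(q^m + q^{-m}) (for -l ≤ m < l) and A_{m-1,m} = -([l+m][l-m+1])^{1/2}/(q^m + q^{-m}) (for -l < m ≤ l), where [a] = (q^a - q^{-a})/(q - q^{-1}). Then A B² - (q+q^{-1}) B A B + B² A = -A and A² B - (q+q^{-1}) A B A + B A² = -B. -/
/-- The q-number `[a] = (q^a - q^{-a})/(q - q⁻¹)` for real `q` and integer `a`. -/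
noncomputable def qnumZ (q : ℝ) (a : ℤ) : ℝ := (q ^ a - q ^ (-a)) / (q - q⁻¹)

/-!
Both relations are checked entrywise in the basis `|m⟩`, `-l ≤ m ≤ l`, with `[2] = q + q⁻¹`.
As `B` is diagonal, the `(m', m)` entry of the first relation is
`A_{m'm} (b_m² - [2] b_{m'} b_m + b_{m'}²)`, and for `|m - m'| = 1` the bracket is `-1` by
`[a]² - [2][a][a+1] + [a+1]² = 1`. The `(m'', m)` entry of the second relation is
`∑ₖ A_{m''k} A_{km} (b_m - [2] b_k + b_{m''})`; off the diagonal only `k = m ± 1`, `m'' = m ± 2`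
contribute, and then the bracket vanishes by `[a] + [a+2] = [2][a+1]`. On the diagonal the two
neighbours `k = m ± 1` leave a rational identity in `q^l, q^m`. The end points `m = ±l` need no
separate treatment: extending the entries to all integers, the product `A_{mk} A_{km}` with the
missing neighbour carries the factor `[l+m+1][l-m]` or `[l+m][l-m+1]`, which vanishes there.
-/

namespace Matrix

variable {n R : Type*} [Fintype n] [DecidableEq n] [CommRing R]

lemma mul_diagonal_sq_sub_smul_add_apply (A : Matrix n n R) (b : n → R) (c : R) (i j : n) :
    (A * diagonal b ^ 2 - c • (diagonal b * A * diagonal b) + diagonal b ^ 2 * A) i j =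
      A i j * (b j ^ 2 - c * b i * b j + b i ^ 2) := by
  simp only [sq, diagonal_mul_diagonal, mul_diagonal, diagonal_mul, sub_apply, add_apply,
    smul_apply, smul_eq_mul]
  ring

lemma sq_mul_diagonal_sub_smul_add_apply (A : Matrix n n R) (b : n → R) (c : R) (i j : n) :
    (A ^ 2 * diagonal b - c • (A * diagonal b * A) + diagonal b * A ^ 2) i j =
      ∑ k, A i k * A k j * (b j - c * b k + b i) := by
  simp only [sq, sub_apply, add_apply, smul_apply, smul_eq_mul, mul_diagonal, diagonal_mul,
    mul_apply (M := A * diagonal b)]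
  simp only [mul_apply, Finset.sum_mul, Finset.mul_sum, ← Finset.sum_sub_distrib,
    ← Finset.sum_add_distrib]
  exact Finset.sum_congr rfl fun k _ => by ring

end Matrix

lemma Fin.sum_univ_two_mul_add_one_eq_sum_Icc {M : Type*} [AddCommMonoid M] (l : ℕ)
    (f : ℤ → M) : ∑ k : Fin (2 * l + 1), f ((k : ℤ) - l) = ∑ m ∈ Finset.Icc (-(l : ℤ)) l, f m := by
  rw [Fin.sum_univ_eq_sum_range (fun k => f ((k : ℤ) - l))]
  refine Finset.sum_nbij' (fun k => (k : ℤ) - l) (fun m => (m + l).toNat) ?_ ?_ ?_ ?_ ?_ <;>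
    intros <;> simp_all <;> omega

section QNumbers

variable {q : ℝ}

lemma ne_zero_of_sub_inv_ne_zero (hq : q - q⁻¹ ≠ 0) : q ≠ 0 := by
  rintro rfl
  simp at hq

lemma sq_sub_one_ne_zero_of_sub_inv_ne_zero (hq : q - q⁻¹ ≠ 0) : q ^ 2 - 1 ≠ 0 := by
  have hq0 := ne_zero_of_sub_inv_ne_zero hq
  contrapose! hq
  field_simp
  linear_combination hq

lemma zpow_add_zpow_neg_ne_zero (hq : q ≠ 0) (m : ℤ) : q ^ m + q ^ (-m) ≠ 0 := by
  have hm : q ^ m ≠ 0 := zpow_ne_zero m hq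
  rw [zpow_neg]
  intro h
  field_simp at h
  nlinarith [sq_nonneg (q ^ m)]

lemma qnumZ_nonneg (hq : 0 < q) {a : ℤ} (ha : 0 ≤ a) : 0 ≤ qnumZ q a := by
  rcases le_total q 1 with h | h
  · refine div_nonneg_of_nonpos ?_ ?_
    · linarith [zpow_le_zpow_right_of_le_one₀ hq h (by omega : -a ≤ a)]
    · linarith [(one_le_inv₀ hq).2 h]
  · refine div_nonneg ?_ ?_
    · linarith [zpow_le_zpow_right₀ h (by omega : -a ≤ a)]
    · linarith [inv_le_one_of_one_le₀ h]

lemma qnumZ_add_qnumZ_add_two (hq : q ≠ 0) (a : ℤ) :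
    qnumZ q a + qnumZ q (a + 2) = (q + q⁻¹) * qnumZ q (a + 1) := by
  simp only [qnumZ, zpow_add₀ hq, zpow_neg, zpow_ofNat]
  field_simp
  ring

lemma qnumZ_sq_sub_add_sq (hq : q - q⁻¹ ≠ 0) (a : ℤ) :
    qnumZ q a ^ 2 - (q + q⁻¹) * qnumZ q a * qnumZ q (a + 1) + qnumZ q (a + 1) ^ 2 = 1 := by
  have hq0 := ne_zero_of_sub_inv_ne_zero hq
  have hq2 := sq_sub_one_ne_zero_of_sub_inv_ne_zero hq
  simp only [qnumZ, zpow_add₀ hq0, zpow_neg, zpow_one]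
  rw [show q - q⁻¹ = (q ^ 2 - 1) / q by field_simp]
  field_simp
  ring

end QNumbers

/- `tlA q l m' m` and `tlB q m` are the matrix entries `⟨m'| T_l(I₃₂) |m⟩` and `⟨m| T_l(I₂₁) |m⟩`,
defined for all integers `m, m'`. -/
noncomputable def tlWeight (q : ℝ) (l m : ℤ) : ℝ := qnumZ q (l + m + 1) * qnumZ q (l - m)

noncomputable def tlA (q : ℝ) (l m' m : ℤ) : ℂ :=
  if m' = m + 1 then ((√(tlWeight q l m) / (q ^ m + q ^ (-m)) : ℝ) : ℂ)
  else if m' = m - 1 then -((√(tlWeight q l (m - 1)) / (q ^ m + q ^ (-m)) : ℝ) : ℂ)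
  else 0

noncomputable def tlB (q : ℝ) (m : ℤ) : ℂ := Complex.I * (qnumZ q m : ℂ)

section TlEntries

variable {q : ℝ} {l : ℤ}

lemma tlWeight_sub_one (m : ℤ) : tlWeight q l (m - 1) = qnumZ q (l + m) * qnumZ q (l - m + 1) := by
  unfold tlWeight
  congr 2 <;> ring

lemma tlWeight_diag (hq : q - q⁻¹ ≠ 0) (m : ℤ) :
    tlWeight q l m / ((q ^ m + q ^ (-m)) * (q ^ (m + 1) + q ^ (-(m + 1)))) *
        (2 * qnumZ q m - (q + q⁻¹) * qnumZ q (m + 1)) +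
      tlWeight q l (m - 1) / ((q ^ (m - 1) + q ^ (-(m - 1))) * (q ^ m + q ^ (-m))) *
        (2 * qnumZ q m - (q + q⁻¹) * qnumZ q (m - 1)) = qnumZ q m := by
  have hq0 := ne_zero_of_sub_inv_ne_zero hq
  have hq2 := sq_sub_one_ne_zero_of_sub_inv_ne_zero hq
  have d₀ := zpow_add_zpow_neg_ne_zero hq0 m
  have d₁ := zpow_add_zpow_neg_ne_zero hq0 (m + 1)
  have d₂ := zpow_add_zpow_neg_ne_zero hq0 (m - 1)
  simp only [tlWeight, qnumZ, zpow_add₀ hq0, zpow_sub₀ hq0, zpow_neg, zpow_one] at d₀ d₁ d₂ ⊢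
  rw [show q - q⁻¹ = (q ^ 2 - 1) / q by field_simp]
  field_simp at d₀ d₁ d₂ ⊢
  ring

lemma tlWeight_nonneg (hq : 0 < q) {m : ℤ} (h₁ : -l - 1 ≤ m) (h₂ : m ≤ l) :
    0 ≤ tlWeight q l m :=
  mul_nonneg (qnumZ_nonneg hq (by omega)) (qnumZ_nonneg hq (by omega))

lemma tlWeight_self : tlWeight q l l = 0 := by
  simp [tlWeight, qnumZ]

lemma tlWeight_neg_sub_one : tlWeight q l (-l - 1) = 0 := by
  rw [tlWeight, show l + (-l - 1) + 1 = 0 by ring]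
  simp [qnumZ]

lemma tlA_eq_zero {m' m : ℤ} (h₁ : m' ≠ m + 1) (h₂ : m' ≠ m - 1) : tlA q l m' m = 0 := by
  simp [tlA, h₁, h₂]

lemma tlA_mul_tlA_add_one (hq : 0 < q) {m : ℤ} (h₁ : -l - 1 ≤ m) (h₂ : m ≤ l) :
    tlA q l m (m + 1) * tlA q l (m + 1) m =
      -((tlWeight q l m / ((q ^ m + q ^ (-m)) * (q ^ (m + 1) + q ^ (-(m + 1)))) : ℝ) : ℂ) := by
  have hw := Real.mul_self_sqrt (tlWeight_nonneg hq h₁ h₂)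
  have key : -(√(tlWeight q l m) / (q ^ (m + 1) + q ^ (-(m + 1)))) *
      (√(tlWeight q l m) / (q ^ m + q ^ (-m))) =
      -(tlWeight q l m / ((q ^ m + q ^ (-m)) * (q ^ (m + 1) + q ^ (-(m + 1))))) := by
    rw [neg_mul, div_mul_div_comm, hw, mul_comm (q ^ (m + 1) + _)]
  simp only [tlA, add_sub_cancel_right, if_pos, if_neg (by omega : m ≠ m + 1 + 1)]
  exact_mod_cast key

lemma tlB_sq_sub_add_sq (hq : q - q⁻¹ ≠ 0) (a : ℤ) :
    tlB q a ^ 2 - ((q : ℂ) + (q : ℂ)⁻¹) * tlB q a * tlB q (a + 1) + tlB q (a + 1) ^ 2 = -1 := by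
  have h := congrArg (fun x : ℝ => (x : ℂ)) (qnumZ_sq_sub_add_sq hq a)
  push_cast at h
  simp only [tlB]
  linear_combination -h + ((qnumZ q a : ℂ) ^ 2 - ((q : ℂ) + (q : ℂ)⁻¹) * qnumZ q a *
    qnumZ q (a + 1) + (qnumZ q (a + 1) : ℂ) ^ 2) * Complex.I_sq

lemma tlA_mul_tlB_sq_sub_add_sq (hq : q - q⁻¹ ≠ 0) (m' m : ℤ) :
    tlA q l m' m * (tlB q m ^ 2 - ((q : ℂ) + (q : ℂ)⁻¹) * tlB q m' * tlB q m + tlB q m' ^ 2) =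
      -tlA q l m' m := by
  by_cases h₁ : m' = m + 1
  · subst h₁
    linear_combination tlA q l (m + 1) m * tlB_sq_sub_add_sq hq m
  by_cases h₂ : m' = m - 1
  · subst h₂
    have h := tlB_sq_sub_add_sq hq (m - 1)
    rw [sub_add_cancel] at h
    linear_combination tlA q l (m - 1) m * h
  simp [tlA_eq_zero h₁ h₂]

lemma tlB_sub_mul_tlB_add_tlB (hq : q ≠ 0) (a : ℤ) :
    tlB q a - ((q : ℂ) + (q : ℂ)⁻¹) * tlB q (a + 1) + tlB q (a + 2) = 0 := by
  have h := congrArg (fun x : ℝ => (x : ℂ)) (qnumZ_add_qnumZ_add_two hq a)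
  push_cast at h
  simp only [tlB]
  linear_combination Complex.I * h

lemma tlA_mul_tlA_mul_eq_zero_of_ne (hq : q ≠ 0) {m'' m : ℤ} (h : m'' ≠ m) (k : ℤ) :
    tlA q l m'' k * tlA q l k m * (tlB q m - ((q : ℂ) + (q : ℂ)⁻¹) * tlB q k + tlB q m'') = 0 := by
  by_cases hk : k = m + 1 ∨ k = m - 1
  · by_cases hm'' : m'' = k + 1 ∨ m'' = k - 1
    · suffices tlB q m - ((q : ℂ) + (q : ℂ)⁻¹) * tlB q k + tlB q m'' = 0 by rw [this, mul_zero]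
      obtain ⟨rfl, rfl⟩ | ⟨rfl, rfl⟩ : k = m + 1 ∧ m'' = m + 2 ∨ k = m - 1 ∧ m'' = m - 2 := by
        omega
      · exact tlB_sub_mul_tlB_add_tlB hq m
      · have h := tlB_sub_mul_tlB_add_tlB hq (m - 2)
        rw [show m - 2 + 1 = m - 1 by ring, show m - 2 + 2 = m by ring] at h
        linear_combination h
    · rw [tlA_eq_zero (not_or.1 hm'').1 (not_or.1 hm'').2, zero_mul, zero_mul]
  · rw [tlA_eq_zero (not_or.1 hk).1 (not_or.1 hk).2, mul_zero, zero_mul]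

lemma sum_tlA_mul_tlA_mul_self (hq : 0 < q) (hq' : q - q⁻¹ ≠ 0) {m : ℤ}
    (hm : m ∈ Finset.Icc (-l) l) :
    ∑ k ∈ Finset.Icc (-l) l,
      tlA q l m k * tlA q l k m * (tlB q m - ((q : ℂ) + (q : ℂ)⁻¹) * tlB q k + tlB q m) =
      -tlB q m := by
  rw [Finset.mem_Icc] at hm
  have hup := tlA_mul_tlA_add_one hq (l := l) (m := m) (by omega) hm.2
  have hdown := tlA_mul_tlA_add_one hq (l := l) (m := m - 1) (by omega) (by omega)
  rw [sub_add_cancel, mul_comm] at hdown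
  rw [Finset.sum_eq_add (m + 1) (m - 1) (by omega)]
  · rw [hup, hdown]
    have h := congrArg (fun x : ℝ => (x : ℂ)) (tlWeight_diag (l := l) hq' m)
    simp only [Complex.ofReal_add, Complex.ofReal_mul, Complex.ofReal_sub, Complex.ofReal_inv,
      Complex.ofReal_ofNat] at h
    simp only [tlB]
    linear_combination (-Complex.I) * h
  · intro k _ hk
    rw [tlA_eq_zero hk.1 hk.2, mul_zero, zero_mul]
  · intro h
    obtain rfl : m = l := by simp only [Finset.mem_Icc] at h; omega
    simp [hup, tlWeight_self]
  · intro h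
    obtain rfl : m = -l := by simp only [Finset.mem_Icc] at h; omega
    simp [hdown, tlWeight_neg_sub_one]

end TlEntries

theorem stmt_11_general (q : ℝ) (hq : 0 < q) (hq1 : q ≠ 1) (l : ℕ)
    (A B : Matrix (Fin (2 * l + 1)) (Fin (2 * l + 1)) ℂ)
    (hB : B = Matrix.diagonal fun i : Fin (2 * l + 1) => Complex.I * (qnumZ q ((i : ℤ) - l) : ℂ))
    (hA : A = Matrix.of fun i j : Fin (2 * l + 1) =>
      if (i : ℤ) = (j : ℤ) + 1 then
        ((Real.sqrt (qnumZ q ((l : ℤ) + ((j : ℤ) - l) + 1) * qnumZ q ((l : ℤ) - ((j : ℤ) - l)))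
          / (q ^ ((j : ℤ) - l) + q ^ (-((j : ℤ) - (l : ℤ)))) : ℝ) : ℂ)
      else if (i : ℤ) = (j : ℤ) - 1 then
        -((Real.sqrt (qnumZ q ((l : ℤ) + ((j : ℤ) - l)) * qnumZ q ((l : ℤ) - ((j : ℤ) - l) + 1))
          / (q ^ ((j : ℤ) - l) + q ^ (-((j : ℤ) - (l : ℤ)))) : ℝ) : ℂ)
      else 0) :
    A * B ^ 2 - ((q : ℂ) + (q : ℂ)⁻¹) • (B * A * B) + B ^ 2 * A = -A ∧
    A ^ 2 * B - ((q : ℂ) + (q : ℂ)⁻¹) • (A * B * A) + B * A ^ 2 = -B := by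
  have hq' : q - q⁻¹ ≠ 0 := sub_ne_zero.2 fun h => hq1 (by field_simp at h; nlinarith)
  have hA' : ∀ i j : Fin (2 * l + 1), A i j = tlA q l (i - l) (j - l) := by
    intro i j
    simp only [hA, Matrix.of_apply, tlA, tlWeight_sub_one]
    split_ifs <;> first | rfl | omega
  obtain rfl : B = Matrix.diagonal fun i : Fin (2 * l + 1) => tlB q (i - l) := hB
  constructor
  · ext i j
    rw [Matrix.mul_diagonal_sq_sub_smul_add_apply, Matrix.neg_apply, hA']
    exact tlA_mul_tlB_sq_sub_add_sq hq' _ _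
  · ext i j
    rw [Matrix.sq_mul_diagonal_sub_smul_add_apply, Matrix.neg_apply, Matrix.diagonal_apply]
    simp only [hA']
    split_ifs with hij
    · subst hij
      exact (Fin.sum_univ_two_mul_add_one_eq_sum_Icc l _).trans
        (sum_tlA_mul_tlA_mul_self hq hq' (Finset.mem_Icc.2 ⟨by omega, by omega⟩))
    · rw [neg_zero]
      exact Finset.sum_eq_zero fun k _ =>
        tlA_mul_tlA_mul_eq_zero_of_ne hq.ne' (by omega) _

/-- the classical-type representation `T_l` of `U'_q(so_3)`:
the matrices `A = T_l(I_{32})` and `B = T_l(I_{21})`, indexed by `m = -l, ..., l`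
(here row/column `i, j ∈ Fin (2l+1)` correspond to `m = i - l`, `m = j - l`),
satisfy both cubic defining relations. -/
theorem stmt_11 (q : ℝ) (hq : 0 < q) (hq1 : q ≠ 1) (l : ℕ) (hl : 1 ≤ l)
    (A B : Matrix (Fin (2 * l + 1)) (Fin (2 * l + 1)) ℂ)
    (hB : B = Matrix.diagonal fun i : Fin (2 * l + 1) => Complex.I * (qnumZ q ((i : ℤ) - l) : ℂ))
    (hA : A = Matrix.of fun i j : Fin (2 * l + 1) =>
      if (i : ℤ) = (j : ℤ) + 1 then
        ((Real.sqrt (qnumZ q ((l : ℤ) + ((j : ℤ) - l) + 1) * qnumZ q ((l : ℤ) - ((j : ℤ) - l)))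
          / (q ^ ((j : ℤ) - l) + q ^ (-((j : ℤ) - (l : ℤ)))) : ℝ) : ℂ)
      else if (i : ℤ) = (j : ℤ) - 1 then
        -((Real.sqrt (qnumZ q ((l : ℤ) + ((j : ℤ) - l)) * qnumZ q ((l : ℤ) - ((j : ℤ) - l) + 1))
          / (q ^ ((j : ℤ) - l) + q ^ (-((j : ℤ) - (l : ℤ)))) : ℝ) : ℂ)
      else 0) :
    A * B ^ 2 - ((q : ℂ) + (q : ℂ)⁻¹) • (B * A * B) + B ^ 2 * A = -A ∧
    A ^ 2 * B - ((q : ℂ) + (q : ℂ)⁻¹) • (A * B * A) + B * A ^ 2 = -B :=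
  stmt_11_general q hq hq1 l A B hB hA
end
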